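/- Let d = 3 and suppose q = (q̄, q_n(q̄)) is a normalized central configuration, with q_i = (x_i, y_i, z_i). Then 0 = Σ_{i=1}^{n−1} m_i ( (z_i − z_n) DF^red_{i,x}(q̄) − (x_i − x_n) DF^red_{i,z}(q̄) ), an identity among the rows of the Jacobian matrix DF^red(q̄). -/

import Mathlib

open scoped BigOperators

noncomputable section

/-- Points in `ℝ^d`, with the Euclidean norm. -/
abbrev Pt (d : ℕ) := EuclideanSpace ℝ (Fin d)

/-- `F_i(q) = −q_i + Σ_{j ≠ i} m_j (q_j − q_i)/‖q_j − q_i‖³`. -/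
noncomputable def nbodyF {d n : ℕ} (m : Fin n → ℝ) (q : Fin n → Pt d) : Fin n → Pt d :=
  fun i => -q i + ∑ j ∈ Finset.univ.erase i, (m j / ‖q j - q i‖ ^ 3) • (q j - q i)

/-- A configuration is collision-free if all bodies occupy distinct positions. -/
def CollisionFree {d n : ℕ} (q : Fin n → Pt d) : Prop :=
  ∀ i j, i ≠ j → q i ≠ q j

/-- A normalized central configuration: collision-free, center of mass at the origin,
and `F(q) = 0`. -/
def IsNCC {d n : ℕ} (m : Fin n → ℝ) (q : Fin n → Pt d) : Prop :=
  CollisionFree q ∧ (∑ i, m i • q i) = 0 ∧ nbodyF m q = 0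

/-- Embedding of the reduced index set `{1,…,n−1}` into `{1,…,n}`. -/
def emb {n : ℕ} (i : Fin (n - 1)) : Fin n := Fin.castLE (Nat.sub_le n 1) i

/-- Extend a reduced configuration `q̄ = (q_1,…,q_{n−1})` by the position of the last body,
`q_n(q̄) = −(1/m_n) Σ_{i<n} m_i q_i`, computed from the center of mass condition. -/
noncomputable def extendConfig {d n : ℕ} (m : Fin n → ℝ) (qbar : Fin (n - 1) → Pt d) :
    Fin n → Pt d :=
  fun i => if h : (i : ℕ) < n - 1 then qbar ⟨i, h⟩
    else (-(1 / m i)) • ∑ j : Fin (n - 1), m (emb j) • qbar j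

/-- The center-of-mass reduced map `F^red_i(q̄) = F_i(q_1,…,q_{n−1},q_n(q̄))`, `i = 1,…,n−1`. -/
noncomputable def Fred {d n : ℕ} (m : Fin n → ℝ) (qbar : Fin (n - 1) → Pt d) :
    Fin (n - 1) → Pt d :=
  fun i => nbodyF m (extendConfig m qbar) (emb i)

/-- The Jacobian matrix of `F`, rows and columns indexed by (body, coordinate). -/
noncomputable def jacF {d n : ℕ} (m : Fin n → ℝ) (q : Fin n → Pt d) :
    Matrix (Fin n × Fin d) (Fin n × Fin d) ℝ :=
  fun p p' =>
    fderiv ℝ (fun q' : Fin n → Pt d => nbodyF m q' p.1 p.2) q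
      (Pi.single p'.1 (EuclideanSpace.single p'.2 (1 : ℝ)))

/-- The Jacobian matrix of `F^red`, rows and columns indexed by (body, coordinate). -/
noncomputable def jacFred {d n : ℕ} (m : Fin n → ℝ) (qbar : Fin (n - 1) → Pt d) :
    Matrix (Fin (n - 1) × Fin d) (Fin (n - 1) × Fin d) ℝ :=
  fun p p' =>
    fderiv ℝ (fun q' : Fin (n - 1) → Pt d => Fred m q' p.1 p.2) qbar
      (Pi.single p'.1 (EuclideanSpace.single p'.2 (1 : ℝ)))

namespace Aux

lemma sum_apply3 {α : Type*} (s : Finset α) (f : α → Pt 3) (v : Fin 3) :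
    (∑ j ∈ s, f j) v = ∑ j ∈ s, f j v := by
  exact map_sum (EuclideanSpace.proj v (𝕜 := ℝ)) f s

lemma nbodyF_apply {n : ℕ} (m : Fin n → ℝ) (q : Fin n → Pt 3) (i : Fin n) (v : Fin 3) :
    nbodyF m q i v = -(q i v) + ∑ j ∈ Finset.univ.erase i,
      (m j / ‖q j - q i‖ ^ 3) * (q j v - q i v) := by
  rw [nbodyF, PiLp.add_apply, PiLp.neg_apply, sum_apply3]
  congr 1

lemma antisym_sum {ι : Type*} [Fintype ι] [DecidableEq ι] (g : ι → ι → ℝ)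
    (hA : ∀ i j, g i j = - g j i) :
    ∑ i, ∑ j ∈ Finset.univ.erase i, g i j = 0 := by
  have hdiag : ∀ i, g i i = 0 := fun i => by have := hA i i; linarith
  have h1 : ∑ i, ∑ j ∈ Finset.univ.erase i, g i j = ∑ i, ∑ j, g i j :=
    Finset.sum_congr rfl fun i _ => Finset.sum_erase _ (hdiag i)
  have h3 : ∀ j : ι, ∑ i, g i j = - ∑ i, g j i := by
    intro j
    rw [← Finset.sum_neg_distrib]
    exact Finset.sum_congr rfl fun i _ => hA i j
  have h2 : ∑ i, ∑ j, g i j = - ∑ i, ∑ j, g i j := by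
    conv_lhs => rw [Finset.sum_comm]
    rw [← Finset.sum_neg_distrib]
    exact Finset.sum_congr rfl fun j _ => h3 j
  rw [h1]; linarith

lemma sum_split {n : ℕ} (hn : 1 ≤ n) {M : Type*} [AddCommMonoid M] (f : Fin n → M) :
    ∑ i, f i = (∑ i : Fin (n - 1), f (emb i)) + f ⟨n - 1, by omega⟩ := by
  have h : n - 1 + 1 = n := by omega
  rw [← Equiv.sum_comp (finCongr h) f, Fin.sum_univ_castSucc]
  have e1 : ∀ i : Fin (n - 1), (finCongr h) i.castSucc = emb i :=
    fun i => Fin.ext (by simp [emb])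
  have e2 : (finCongr h) (Fin.last (n - 1)) = (⟨n - 1, by omega⟩ : Fin n) :=
    Fin.ext (by simp)
  simp only [e1, e2]

lemma ext_emb {n : ℕ} (m : Fin n → ℝ) (qbar : Fin (n - 1) → Pt 3) (i : Fin (n - 1)) :
    extendConfig m qbar (emb i) = qbar i := by
  rw [extendConfig, dif_pos (show ((emb i : Fin n) : ℕ) < n - 1 from i.2)]
  exact congrArg qbar (Fin.ext rfl)

lemma ext_last {n : ℕ} (hn : 1 ≤ n) (m : Fin n → ℝ) (qbar : Fin (n - 1) → Pt 3) :
    extendConfig m qbar ⟨n - 1, by omega⟩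
      = (-(1 / m ⟨n - 1, by omega⟩)) • ∑ j : Fin (n - 1), m (emb j) • qbar j := by
  rw [extendConfig, dif_neg (by simp)]

lemma com {n : ℕ} (hn : 1 ≤ n) (m : Fin n → ℝ) (hm : m ⟨n - 1, by omega⟩ ≠ 0)
    (qbar : Fin (n - 1) → Pt 3) :
    ∑ i, m i • extendConfig m qbar i = 0 := by
  rw [sum_split hn, ext_last hn]
  have h1 : (∑ i : Fin (n - 1), m (emb i) • extendConfig m qbar (emb i))
      = ∑ j : Fin (n - 1), m (emb j) • qbar j :=
    Finset.sum_congr rfl fun i _ => by rw [ext_emb]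
  rw [h1, smul_smul]
  rw [mul_neg, mul_one_div, div_self hm]
  simp

lemma rowsum_F {n : ℕ} (hn : 1 ≤ n) (m : Fin n → ℝ) (hm : m ⟨n - 1, by omega⟩ ≠ 0)
    (qbar : Fin (n - 1) → Pt 3) (v : Fin 3) :
    ∑ i, m i * nbodyF m (extendConfig m qbar) i v = 0 := by
  set q := extendConfig m qbar with hq
  have hexp : ∀ i : Fin n, m i * nbodyF m q i v
      = -(m i * q i v) + ∑ j ∈ Finset.univ.erase i,
          m i * ((m j / ‖q j - q i‖ ^ 3) * (q j v - q i v)) := by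
    intro i; rw [nbodyF_apply, mul_add, mul_neg, Finset.mul_sum]
  simp_rw [hexp]
  rw [Finset.sum_add_distrib]
  have h1 : ∑ i : Fin n, -(m i * q i v) = 0 := by
    have hc := congrArg (fun w : Pt 3 => w v) (com hn m hm qbar)
    simp only [sum_apply3, PiLp.smul_apply, smul_eq_mul] at hc
    rw [Finset.sum_neg_distrib]
    simp only [PiLp.zero_apply] at hc
    rw [← hq] at hc
    rw [hc, neg_zero]
  have h2 : (∑ i : Fin n, ∑ j ∈ Finset.univ.erase i,
      m i * ((m j / ‖q j - q i‖ ^ 3) * (q j v - q i v))) = 0 := by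
    apply antisym_sum
    intro i j
    rw [norm_sub_rev (q i) (q j)]
    ring
  rw [h1, h2, zero_add]

lemma rowsum_moment {n : ℕ} (m : Fin n → ℝ) (q : Fin n → Pt 3) :
    ∑ i, m i * (q i 2 * nbodyF m q i 0 - q i 0 * nbodyF m q i 2) = 0 := by
  have hexp : ∀ i : Fin n, m i * (q i 2 * nbodyF m q i 0 - q i 0 * nbodyF m q i 2)
      = ∑ j ∈ Finset.univ.erase i, m i * ((m j / ‖q j - q i‖ ^ 3) *
          (q i 2 * (q j 0 - q i 0) - q i 0 * (q j 2 - q i 2))) := by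
    intro i
    rw [nbodyF_apply, nbodyF_apply]
    calc m i * (q i 2 * (-(q i 0) + ∑ j ∈ Finset.univ.erase i,
            (m j / ‖q j - q i‖ ^ 3) * (q j 0 - q i 0))
          - q i 0 * (-(q i 2) + ∑ j ∈ Finset.univ.erase i,
            (m j / ‖q j - q i‖ ^ 3) * (q j 2 - q i 2)))
        = (m i * q i 2) * (∑ j ∈ Finset.univ.erase i,
            (m j / ‖q j - q i‖ ^ 3) * (q j 0 - q i 0))
          - (m i * q i 0) * (∑ j ∈ Finset.univ.erase i,
            (m j / ‖q j - q i‖ ^ 3) * (q j 2 - q i 2)) := by ring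
      _ = ∑ j ∈ Finset.univ.erase i,
            ((m i * q i 2) * ((m j / ‖q j - q i‖ ^ 3) * (q j 0 - q i 0))
              - (m i * q i 0) * ((m j / ‖q j - q i‖ ^ 3) * (q j 2 - q i 2))) := by
          rw [Finset.mul_sum, Finset.mul_sum, Finset.sum_sub_distrib]
      _ = ∑ j ∈ Finset.univ.erase i, m i * ((m j / ‖q j - q i‖ ^ 3) *
            (q i 2 * (q j 0 - q i 0) - q i 0 * (q j 2 - q i 2))) :=
          Finset.sum_congr rfl fun j _ => by ring
  simp_rw [hexp]
  apply antisym_sum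
  intro i j
  rw [norm_sub_rev (q i) (q j)]
  ring

lemma key_zero {n : ℕ} (hn : 1 ≤ n) (m : Fin n → ℝ) (hm : m ⟨n - 1, by omega⟩ ≠ 0)
    (qb : Fin (n - 1) → Pt 3) :
    ∑ i : Fin (n - 1), m (emb i) *
      ((qb i 2 - extendConfig m qb ⟨n - 1, by omega⟩ 2) * Fred m qb i 0 -
        (qb i 0 - extendConfig m qb ⟨n - 1, by omega⟩ 0) * Fred m qb i 2) = 0 := by
  set q := extendConfig m qb with hq
  set G : Fin n → ℝ := fun i => m i *
    ((q i 2 - q ⟨n - 1, by omega⟩ 2) * nbodyF m q i 0 -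
      (q i 0 - q ⟨n - 1, by omega⟩ 0) * nbodyF m q i 2) with hG
  have hLHS : ∑ i : Fin (n - 1), m (emb i) *
      ((qb i 2 - q ⟨n - 1, by omega⟩ 2) * Fred m qb i 0 -
        (qb i 0 - q ⟨n - 1, by omega⟩ 0) * Fred m qb i 2)
      = ∑ i : Fin (n - 1), G (emb i) := by
    refine Finset.sum_congr rfl fun i _ => ?_
    show _ = m (emb i) * ((q (emb i) 2 - q ⟨n - 1, by omega⟩ 2) * nbodyF m q (emb i) 0 -
      (q (emb i) 0 - q ⟨n - 1, by omega⟩ 0) * nbodyF m q (emb i) 2)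
    rw [show q (emb i) = qb i from ext_emb m qb i]
    rfl
  rw [hLHS]
  have hsplit := sum_split hn G
  have hGlast : G ⟨n - 1, by omega⟩ = 0 := by simp [hG]
  have htot : ∑ i : Fin n, G i = 0 := by
    have hterm : ∀ i : Fin n, G i
        = m i * (q i 2 * nbodyF m q i 0 - q i 0 * nbodyF m q i 2)
          - (q ⟨n - 1, by omega⟩ 2 * (m i * nbodyF m q i 0)
            - q ⟨n - 1, by omega⟩ 0 * (m i * nbodyF m q i 2)) := fun i => by
      rw [hG]; ring
    calc ∑ i : Fin n, G i
        = (∑ i, m i * (q i 2 * nbodyF m q i 0 - q i 0 * nbodyF m q i 2))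
          - ((q ⟨n - 1, by omega⟩ 2) * ∑ i, m i * nbodyF m q i 0
            - (q ⟨n - 1, by omega⟩ 0) * ∑ i, m i * nbodyF m q i 2) := by
          simp_rw [hterm]
          rw [Finset.sum_sub_distrib, Finset.sum_sub_distrib, Finset.mul_sum, Finset.mul_sum]
      _ = 0 := by
          rw [rowsum_moment, hq, rowsum_F hn m hm qb 0, rowsum_F hn m hm qb 2]
          ring
  rw [htot, hGlast, add_zero] at hsplit
  exact hsplit.symm

noncomputable def extCLM {n : ℕ} (m : Fin n → ℝ) (i : Fin n) :
    (Fin (n - 1) → Pt 3) →L[ℝ] Pt 3 :=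
  if h : (i : ℕ) < n - 1 then ContinuousLinearMap.proj ⟨i, h⟩
  else (-(1 / m i)) • ∑ j : Fin (n - 1), m (emb j) • ContinuousLinearMap.proj j

lemma extCLM_apply {n : ℕ} (m : Fin n → ℝ) (i : Fin n) (q' : Fin (n - 1) → Pt 3) :
    extCLM m i q' = extendConfig m q' i := by
  rw [extCLM, extendConfig]
  split
  · rfl
  · simp only [ContinuousLinearMap.smul_apply, ContinuousLinearMap.sum_apply,
      ContinuousLinearMap.proj_apply]

lemma fred_diffAt {n : ℕ} (m : Fin n → ℝ)
    (qbar : Fin (n - 1) → Pt 3) (hc : CollisionFree (extendConfig m qbar))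
    (i : Fin (n - 1)) (v : Fin 3) :
    DifferentiableAt ℝ (fun q' => Fred m q' i v) qbar := by
  have hrw : (fun q' : Fin (n - 1) → Pt 3 => Fred m q' i v)
      = fun q' => -(extCLM m (emb i) q' v) + ∑ j ∈ Finset.univ.erase (emb i),
          (m j * ((‖extCLM m j q' - extCLM m (emb i) q'‖ ^ 3)⁻¹))
            * (extCLM m j q' v - extCLM m (emb i) q' v) := by
    funext q'
    rw [Fred, nbodyF_apply]
    simp only [extCLM_apply, div_eq_mul_inv]
  rw [hrw]
  apply DifferentiableAt.add
  · exact (((EuclideanSpace.proj v (𝕜 := ℝ)).comp (extCLM m (emb i))).differentiableAt).neg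
  · apply DifferentiableAt.fun_sum
    intro j hj
    have hne : j ≠ emb i := (Finset.mem_erase.1 hj).1
    set D : (Fin (n - 1) → Pt 3) →L[ℝ] Pt 3 := extCLM m j - extCLM m (emb i) with hD
    have h0 : D qbar ≠ 0 := by
      have hDq : D qbar = extendConfig m qbar j - extendConfig m qbar (emb i) := by
        rw [hD, ContinuousLinearMap.sub_apply, extCLM_apply, extCLM_apply]
      rw [hDq]
      exact sub_ne_zero.2 (hc j (emb i) hne)
    have hnorm : DifferentiableAt ℝ (fun q' => ‖D q'‖) qbar :=
      DifferentiableAt.norm (𝕜 := ℝ) D.differentiableAt h0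
    have hden : ‖D qbar‖ ^ 3 ≠ 0 := pow_ne_zero _ (norm_ne_zero_iff.2 h0)
    have hpow : DifferentiableAt ℝ (fun q' => ‖D q'‖ ^ 3) qbar := hnorm.pow 3
    have hconst : DifferentiableAt ℝ (fun _ : Fin (n - 1) → Pt 3 => m j) qbar :=
      differentiableAt_const _
    have hdiv : DifferentiableAt ℝ (fun q' => m j * (‖D q'‖ ^ 3)⁻¹) qbar :=
      hconst.mul (hpow.inv hden)
    have hlin : DifferentiableAt ℝ (fun q' => D q' v) qbar :=
      ((EuclideanSpace.proj v (𝕜 := ℝ)).comp D).differentiableAt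
    exact hdiv.mul hlin

end Aux

/-- `0 = Σ_i m_i ((z_i − z_n) DF^red_{i,x} − (x_i − x_n) DF^red_{i,z})`
as an identity among the rows of `DF^red(q̄)` (here `x = 0`, `z = 2`). -/
theorem stmt3 {n : ℕ} (hn : 3 ≤ n) (m : Fin n → ℝ) (hm : ∀ i, 0 < m i)
    (qbar : Fin (n - 1) → Pt 3) (hcc : IsNCC m (extendConfig m qbar)) :
    ∀ p : Fin (n - 1) × Fin 3,
      ∑ i : Fin (n - 1), m (emb i) *
        ((qbar i 2 - extendConfig m qbar ⟨n - 1, by omega⟩ 2) * jacFred m qbar (i, 0) p -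
          (qbar i 0 - extendConfig m qbar ⟨n - 1, by omega⟩ 0) * jacFred m qbar (i, 2) p) = 0 := by
  intro p
  have hn1 : 1 ≤ n := by omega
  have hm' : m ⟨n - 1, by omega⟩ ≠ 0 := (hm _).ne'
  obtain ⟨hcf, -, hF0⟩ := hcc
  have hFzero : ∀ (i : Fin (n - 1)) (v : Fin 3), Fred m qbar i v = 0 := by
    intro i v
    have h1 : Fred m qbar i = 0 := by
      show nbodyF m (extendConfig m qbar) (emb i) = 0
      rw [hF0]; rfl
    rw [h1]; rfl
  set Z : Fin (n - 1) → ((Fin (n - 1) → Pt 3) →L[ℝ] ℝ) := fun i =>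
    (EuclideanSpace.proj (2 : Fin 3) (𝕜 := ℝ)).comp
      (ContinuousLinearMap.proj i - Aux.extCLM m ⟨n - 1, by omega⟩) with hZ
  set X : Fin (n - 1) → ((Fin (n - 1) → Pt 3) →L[ℝ] ℝ) := fun i =>
    (EuclideanSpace.proj (0 : Fin 3) (𝕜 := ℝ)).comp
      (ContinuousLinearMap.proj i - Aux.extCLM m ⟨n - 1, by omega⟩) with hX
  have hZa : ∀ (i : Fin (n - 1)) (q' : Fin (n - 1) → Pt 3),
      Z i q' = q' i 2 - extendConfig m q' ⟨n - 1, by omega⟩ 2 := by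
    intro i q'
    simp only [hZ, ContinuousLinearMap.coe_comp', Function.comp_apply,
      ContinuousLinearMap.sub_apply, ContinuousLinearMap.proj_apply,
      Aux.extCLM_apply, PiLp.proj_apply]
    rfl
  have hXa : ∀ (i : Fin (n - 1)) (q' : Fin (n - 1) → Pt 3),
      X i q' = q' i 0 - extendConfig m q' ⟨n - 1, by omega⟩ 0 := by
    intro i q'
    simp only [hX, ContinuousLinearMap.coe_comp', Function.comp_apply,
      ContinuousLinearMap.sub_apply, ContinuousLinearMap.proj_apply,
      Aux.extCLM_apply, PiLp.proj_apply]
    rfl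
  have hdf := fun (i : Fin (n - 1)) (v : Fin 3) =>
    (Aux.fred_diffAt m qbar hcf i v).hasFDerivAt
  set D : Fin (n - 1) → ((Fin (n - 1) → Pt 3) →L[ℝ] ℝ) := fun i =>
    m (emb i) • ((Z i qbar • fderiv ℝ (fun q' => Fred m q' i 0) qbar + Fred m qbar i 0 • Z i)
      - (X i qbar • fderiv ℝ (fun q' => Fred m q' i 2) qbar + Fred m qbar i 2 • X i)) with hD
  have hterm : ∀ i : Fin (n - 1), HasFDerivAt
      (fun q' => m (emb i) * (Z i q' * Fred m q' i 0 - X i q' * Fred m q' i 2)) (D i) qbar :=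
    fun i =>
      (((Z i).hasFDerivAt.mul (hdf i 0)).sub ((X i).hasFDerivAt.mul (hdf i 2))).const_mul _
  have hsum : HasFDerivAt (fun q' => ∑ i : Fin (n - 1),
      m (emb i) * (Z i q' * Fred m q' i 0 - X i q' * Fred m q' i 2)) (∑ i, D i) qbar :=
    HasFDerivAt.fun_sum fun i _ => hterm i
  have hfun : (fun q' => ∑ i : Fin (n - 1),
      m (emb i) * (Z i q' * Fred m q' i 0 - X i q' * Fred m q' i 2)) = fun _ => (0 : ℝ) := by
    funext q'
    calc ∑ i : Fin (n - 1), m (emb i) * (Z i q' * Fred m q' i 0 - X i q' * Fred m q' i 2)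
        = ∑ i : Fin (n - 1), m (emb i) *
          ((q' i 2 - extendConfig m q' ⟨n - 1, by omega⟩ 2) * Fred m q' i 0 -
            (q' i 0 - extendConfig m q' ⟨n - 1, by omega⟩ 0) * Fred m q' i 2) :=
          Finset.sum_congr rfl fun i _ => by rw [hZa, hXa]
      _ = 0 := Aux.key_zero hn1 m hm' q'
  have hD0 : (∑ i, D i) = 0 := by
    rw [hfun] at hsum
    exact hsum.unique (hasFDerivAt_const 0 qbar)
  have hDu := congrArg (fun L : (Fin (n - 1) → Pt 3) →L[ℝ] ℝ =>
      L (Pi.single p.1 (EuclideanSpace.single p.2 (1 : ℝ)))) hD0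
  simp only [ContinuousLinearMap.sum_apply, ContinuousLinearMap.zero_apply, hD,
    ContinuousLinearMap.smul_apply, ContinuousLinearMap.add_apply,
    ContinuousLinearMap.sub_apply, hFzero, zero_smul, add_zero, smul_eq_mul] at hDu
  calc ∑ i : Fin (n - 1), m (emb i) *
        ((qbar i 2 - extendConfig m qbar ⟨n - 1, by omega⟩ 2) * jacFred m qbar (i, 0) p -
          (qbar i 0 - extendConfig m qbar ⟨n - 1, by omega⟩ 0) * jacFred m qbar (i, 2) p)
      = ∑ i : Fin (n - 1), m (emb i) *
        (Z i qbar * (fderiv ℝ (fun q' => Fred m q' i 0) qbar)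
            (Pi.single p.1 (EuclideanSpace.single p.2 (1 : ℝ))) -
          X i qbar * (fderiv ℝ (fun q' => Fred m q' i 2) qbar)
            (Pi.single p.1 (EuclideanSpace.single p.2 (1 : ℝ)))) :=
        Finset.sum_congr rfl fun i _ => by rw [hZa, hXa]; rfl
    _ = 0 := hDu
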